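/- arXiv:1608.03810 — 4 statements merged into one kernel-verified Lean document; each statement's English description precedes it below -/
import Mathlib

section
/- For all nonzero integers b, c and all rational T ≠ 0 such that the denominator D = T^4 + 2bT^3 + (b^2+6c)T^2 + 2bcT + c^2 is nonzero, the triple (x, y, z) with x = T, y = -4bcT^2/D, and z = (T^8 + 4bT^7 + (10b^2+12c)T^6 + (12b^3+28bc)T^5 + (5b^4+28b^2c+38c^2)T^4 + (12b^3c+28bc^2)T^3 + (10b^2c^2+12c^3)T^2 + 4bc^3T + c^4)/(4bT^2 D) satisfies z^2 = f(x)^2 + f(y)^2, where f(x) = x + b + c/x. -/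
/-!
Write `P = T² + bT + c`, so that `f T = P / T` and `D = P² + 4cT²`. With `B = 2bTP` and the common
denominator `w = 4bT²D`, one finds `f T = 2BD / w`, `f y = (B² - D²) / w` and `z = (B² + D²) / w`,
so `(z, f T, f y)` is the Pythagorean triple `(B² + D², 2BD, B² - D²)` scaled by `1 / w`.
-/

section

variable {K : Type*} [Field K]

theorem sq_add_sq_div_sq_eq (A B w : K) :
    ((A^2 + B^2) / w)^2 = (2*A*B / w)^2 + ((A^2 - B^2) / w)^2 := by
  ring

theorem add_add_div_self_eq_two_mul_div [NeZero (4 : K)] {b c T D : K} (hb : b ≠ 0) (hT : T ≠ 0)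
    (hD : D ≠ 0) :
    T + b + c / T = 2 * (2*b*T*(T^2 + b*T + c)) * D / (4*b*T^2*D) := by
  field_simp
  ring

theorem add_add_div_neg_div_eq_sub_div [NeZero (4 : K)] {b c T D : K} (hb : b ≠ 0) (hc : c ≠ 0)
    (hT : T ≠ 0) (hD : D ≠ 0) (hD_eq : D = (T^2 + b*T + c)^2 + 4*c*T^2) :
    -4*b*c*T^2 / D + b + c / (-4*b*c*T^2 / D)
      = ((2*b*T*(T^2 + b*T + c))^2 - D^2) / (4*b*T^2*D) := by
  field_simp
  rw [hD_eq]
  ring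

end

theorem stmt_0 (b c : ℤ) (hb : b ≠ 0) (hc : c ≠ 0) (T : ℚ) (hT : T ≠ 0)
    (hD : T^4 + 2*b*T^3 + (b^2 + 6*c)*T^2 + 2*b*c*T + c^2 ≠ 0) :
    let f : ℚ → ℚ := fun u => u + b + c / u
    let D : ℚ := T^4 + 2*b*T^3 + (b^2 + 6*c)*T^2 + 2*b*c*T + c^2
    let y : ℚ := -4*b*c*T^2 / D
    let z : ℚ := (T^8 + 4*b*T^7 + (10*b^2 + 12*c)*T^6 + (12*b^3 + 28*b*c)*T^5
      + (5*b^4 + 28*b^2*c + 38*c^2)*T^4 + (12*b^3*c + 28*b*c^2)*T^3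
      + (10*b^2*c^2 + 12*c^3)*T^2 + 4*b*c^3*T + c^4) / (4*b*T^2*D)
    z^2 = f T ^ 2 + f y ^ 2 := by
  intro f D y z
  have hb' : (b : ℚ) ≠ 0 := Int.cast_ne_zero.mpr hb
  have hc' : (c : ℚ) ≠ 0 := Int.cast_ne_zero.mpr hc
  have hD_eq : D = (T^2 + b*T + c)^2 + 4*c*T^2 := by ring
  have hz : z = ((2*b*T*(T^2 + b*T + c))^2 + D^2) / (4*b*T^2*D) := by
    simp only [z, D]
    ring
  rw [hz, sq_add_sq_div_sq_eq]
  simp only [f]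
  rw [add_add_div_self_eq_two_mul_div hb' hT hD,
    add_add_div_neg_div_eq_sub_div hb' hc' hT hD hD_eq]
end

section
/- The point Q = (3(r^2−1)(r^6+4r^5+5r^4−8r^3+55r^2+4r−13), 108(r^2+2r−1)(r^2−2r−1)(r^3−r+2)(r^2−1)^2) lies on the elliptic curve V^2 = U^3 + c_1 U + c_2, where c_1 = −27(13r^{12}+8r^{11}−70r^{10}+120r^9+371r^8−400r^7+140r^6+400r^5+371r^4−120r^3−70r^2−8r+13)(r^2−1)^2 and c_2 = 54(r^4+4r^3+18r^2−4r+1)(19r^{12}+8r^{11}−130r^{10}+120r^9+461r^8−400r^7+452r^6+400r^5+461r^4−120r^3−130r^2−8r+19)(r^2−1)^4, for every rational r. -/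
theorem stmt_7 (r : ℚ) :
    let U : ℚ := 3*(r^2 - 1)*(r^6 + 4*r^5 + 5*r^4 - 8*r^3 + 55*r^2 + 4*r - 13)
    let V : ℚ := 108*(r^2 + 2*r - 1)*(r^2 - 2*r - 1)*(r^3 - r + 2)*(r^2 - 1)^2
    let c₁ : ℚ := -27*(13*r^12 + 8*r^11 - 70*r^10 + 120*r^9 + 371*r^8 - 400*r^7
      + 140*r^6 + 400*r^5 + 371*r^4 - 120*r^3 - 70*r^2 - 8*r + 13)*(r^2 - 1)^2
    let c₂ : ℚ := 54*(r^4 + 4*r^3 + 18*r^2 - 4*r + 1)*(19*r^12 + 8*r^11 - 130*r^10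
      + 120*r^9 + 461*r^8 - 400*r^7 + 452*r^6 + 400*r^5 + 461*r^4 - 120*r^3
      - 130*r^2 - 8*r + 19)*(r^2 - 1)^4
    V^2 = U^3 + c₁*U + c₂ := by
  dsimp only; ring
end

section
/- For every rational r with r^3 − r + 2 ≠ 0, the point [2]Q on the elliptic curve E(r): V^2 = U^3 + c_1 U + c_2 (doubling of Q = (3(r^2−1)(r^6+4r^5+5r^4−8r^3+55r^2+4r−13), 108(r^2+2r−1)(r^2−2r−1)(r^3−r+2)(r^2−1)^2)) has U-coordinate equal to 3(3r^{16}−20r^{14}+16r^{13}+68r^{12}−64r^{11}−220r^{10}+400r^9+970r^8−896r^7+1268r^6+688r^5+1428r^4−64r^3−516r^2−80r+91)/(2(r^3−r+2))^2. -/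
/-!
The numerator `3U² + c₁` of the tangent slope at `Q` is divisible by `V / (r³ - r + 2)`, so the
slope `λ` is a polynomial in `r` over `2(r³ - r + 2)`; the `U`-coordinate `λ² - 2U` of `[2]Q` then
has denominator `(2(r³ - r + 2))²`, with numerator given by a polynomial identity.
-/

namespace DoublingQ

variable {K : Type*} [Field K] (r : K)

def D : K := r^3 - r + 2

def U : K := 3*(r^2 - 1)*(r^6 + 4*r^5 + 5*r^4 - 8*r^3 + 55*r^2 + 4*r - 13)

def V : K := 108*(r^2 + 2*r - 1)*(r^2 - 2*r - 1)*(r^3 - r + 2)*(r^2 - 1)^2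

def c₁ : K := -27*(13*r^12 + 8*r^11 - 70*r^10 + 120*r^9 + 371*r^8 - 400*r^7
  + 140*r^6 + 400*r^5 + 371*r^4 - 120*r^3 - 70*r^2 - 8*r + 13)*(r^2 - 1)^2

def slopeNum : K := -3*(r^8 - 2*r^6 + 8*r^5 + 12*r^4 - 16*r^3 + 34*r^2 + 8*r - 13)

def doubleUNum : K := 3*(3*r^16 - 20*r^14 + 16*r^13 + 68*r^12 - 64*r^11 - 220*r^10
  + 400*r^9 + 970*r^8 - 896*r^7 + 1268*r^6 + 688*r^5 + 1428*r^4 - 64*r^3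
  - 516*r^2 - 80*r + 91)

theorem three_mul_U_sq_add_c₁_mul_D : (3 * U r ^ 2 + c₁ r) * D r = V r * slopeNum r := by
  unfold U c₁ D V slopeNum
  ring

theorem slopeNum_sq_sub : slopeNum r ^ 2 - 2 * U r * (2 * D r) ^ 2 = doubleUNum r := by
  unfold slopeNum U D doubleUNum
  ring

theorem D_ne_zero_of_V_ne_zero (hV : V r ≠ 0) : D r ≠ 0 :=
  right_ne_zero_of_mul (left_ne_zero_of_mul hV)

theorem tangent_slope_eq (hV : V r ≠ 0) :
    (3 * U r ^ 2 + c₁ r) / (2 * V r) = slopeNum r / (2 * D r) := by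
  rw [eq_div_of_mul_eq (D_ne_zero_of_V_ne_zero r hV) (three_mul_U_sq_add_c₁_mul_D r)]
  field_simp

theorem double_U_eq (hV : V r ≠ 0) :
    ((3 * U r ^ 2 + c₁ r) / (2 * V r)) ^ 2 - 2 * U r = doubleUNum r / (2 * D r) ^ 2 := by
  have hD := D_ne_zero_of_V_ne_zero r hV
  rw [tangent_slope_eq r hV, ← slopeNum_sq_sub, div_pow]
  field_simp

end DoublingQ

theorem stmt_8_general (r : ℚ)
    (hV : 108*(r^2 + 2*r - 1)*(r^2 - 2*r - 1)*(r^3 - r + 2)*(r^2 - 1)^2 ≠ 0) :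
    let U : ℚ := 3*(r^2 - 1)*(r^6 + 4*r^5 + 5*r^4 - 8*r^3 + 55*r^2 + 4*r - 13)
    let V : ℚ := 108*(r^2 + 2*r - 1)*(r^2 - 2*r - 1)*(r^3 - r + 2)*(r^2 - 1)^2
    let c₁ : ℚ := -27*(13*r^12 + 8*r^11 - 70*r^10 + 120*r^9 + 371*r^8 - 400*r^7
      + 140*r^6 + 400*r^5 + 371*r^4 - 120*r^3 - 70*r^2 - 8*r + 13)*(r^2 - 1)^2
    let lam : ℚ := (3*U^2 + c₁) / (2*V)
    lam^2 - 2*U = 3*(3*r^16 - 20*r^14 + 16*r^13 + 68*r^12 - 64*r^11 - 220*r^10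
      + 400*r^9 + 970*r^8 - 896*r^7 + 1268*r^6 + 688*r^5 + 1428*r^4 - 64*r^3
      - 516*r^2 - 80*r + 91) / (2*(r^3 - r + 2))^2 :=
  DoublingQ.double_U_eq r hV

/-- Doubling formula on `V^2 = U^3 + c₁U + c₂`: the `U`-coordinate of `[2]Q`
is `λ² − 2U` where `λ = (3U² + c₁)/(2V)`. -/
theorem stmt_8 (r : ℚ) (h : r^3 - r + 2 ≠ 0)
    (hV : 108*(r^2 + 2*r - 1)*(r^2 - 2*r - 1)*(r^3 - r + 2)*(r^2 - 1)^2 ≠ 0) :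
    let U : ℚ := 3*(r^2 - 1)*(r^6 + 4*r^5 + 5*r^4 - 8*r^3 + 55*r^2 + 4*r - 13)
    let V : ℚ := 108*(r^2 + 2*r - 1)*(r^2 - 2*r - 1)*(r^3 - r + 2)*(r^2 - 1)^2
    let c₁ : ℚ := -27*(13*r^12 + 8*r^11 - 70*r^10 + 120*r^9 + 371*r^8 - 400*r^7
      + 140*r^6 + 400*r^5 + 371*r^4 - 120*r^3 - 70*r^2 - 8*r + 13)*(r^2 - 1)^2
    let lam : ℚ := (3*U^2 + c₁) / (2*V)
    lam^2 - 2*U = 3*(3*r^16 - 20*r^14 + 16*r^13 + 68*r^12 - 64*r^11 - 220*r^10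
      + 400*r^9 + 970*r^8 - 896*r^7 + 1268*r^6 + 688*r^5 + 1428*r^4 - 64*r^3
      - 516*r^2 - 80*r + 91) / (2*(r^3 - r + 2))^2 :=
  stmt_8_general r hV
end

section
/- The discriminant of the quartic p(x) = a_4x^4 + a_3x^3 + a_2x^2 + a_1x + a_0 with a_4 = r^8−4r^6+22r^4−4r^2+1, a_3 = −2b(r^2−2r−1)(r−1)^3(r+1)^3, a_2 = b^2(r^4−8r^3−6r^2+8r+1)(r−1)^2(r+1)^2, a_1 = 4b^3r(r^2−2r−1)(r−1)^2(r+1)^2, a_0 = b^4(r−1)^2(r+1)^2(r^2+1)^2 equals 16(17r^6−26r^5+27r^4+4r^3−5r^2−2r+1)(r^6+2r^5−5r^4−4r^3+27r^2+26r+17)(r^2+1)^4(r^2+2r−1)^4(r^2−2r−1)^4(r^2−1)^6 b^{12}, and this is nonzero for every nonzero rational b and every rational r ≠ 0, ±1. -/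
/-!
The discriminant identity is a polynomial identity in `b` and `r`. For its nonvanishing, both
sextic factors are positive on all of `ℚ` (sums of squares), `r ^ 2 ± 2 * r - 1 = (r ± 1) ^ 2 - 2`
has no rational root since `2` is not a rational square, and `r ^ 2 + 1 > 0`.
-/

/-- The discriminant of a quartic `a₄x⁴ + a₃x³ + a₂x² + a₁x + a₀`
(standard formula). -/
def quarticDisc (a₄ a₃ a₂ a₁ a₀ : ℚ) : ℚ :=
  256*a₄^3*a₀^3 - 192*a₄^2*a₃*a₁*a₀^2 - 128*a₄^2*a₂^2*a₀^2
    + 144*a₄^2*a₂*a₁^2*a₀ - 27*a₄^2*a₁^4 + 144*a₄*a₃^2*a₂*a₀^2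
    - 6*a₄*a₃^2*a₁^2*a₀ - 80*a₄*a₃*a₂^2*a₁*a₀ + 18*a₄*a₃*a₂*a₁^3
    + 16*a₄*a₂^4*a₀ - 4*a₄*a₂^3*a₁^2 - 27*a₃^4*a₀^2 + 18*a₃^3*a₂*a₁*a₀
    - 4*a₃^3*a₁^3 - 4*a₃^2*a₂^3*a₀ + a₃^2*a₂^2*a₁^2

theorem quarticDisc_eq (b r : ℚ) :
    quarticDisc (r^8 - 4*r^6 + 22*r^4 - 4*r^2 + 1) (-2*b*(r^2 - 2*r - 1)*(r - 1)^3*(r + 1)^3)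
      (b^2*(r^4 - 8*r^3 - 6*r^2 + 8*r + 1)*(r - 1)^2*(r + 1)^2)
      (4*b^3*r*(r^2 - 2*r - 1)*(r - 1)^2*(r + 1)^2) (b^4*(r - 1)^2*(r + 1)^2*(r^2 + 1)^2)
      = 16*(17*r^6 - 26*r^5 + 27*r^4 + 4*r^3 - 5*r^2 - 2*r + 1)
        * (r^6 + 2*r^5 - 5*r^4 - 4*r^3 + 27*r^2 + 26*r + 17)
        * (r^2 + 1)^4 * (r^2 + 2*r - 1)^4 * (r^2 - 2*r - 1)^4 * (r^2 - 1)^6 * b^12 := by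
  unfold quarticDisc
  ring

section Sextics

variable {R : Type*} [CommRing R] [LinearOrder R] [IsStrictOrderedRing R] (r : R)

theorem sextic_pos : 0 < 17*r^6 - 26*r^5 + 27*r^4 + 4*r^3 - 5*r^2 - 2*r + 1 := by
  nlinarith [sq_nonneg (25*r^3 - 36*r^2 - 8*r + 8), sq_nonneg (33*r^3 + 75*r^2 - 40*r),
    sq_nonneg (1145*r^3 - 2369*r^2), sq_nonneg (r^3), sq_nonneg r]

/-- The reflection `r ^ 6 * f (-1 / r)` of the sextic `f` of `sextic_pos`. -/
theorem sextic_reflected_pos : 0 < r^6 + 2*r^5 - 5*r^4 - 4*r^3 + 27*r^2 + 26*r + 17 := by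
  nlinarith [sq_nonneg (r^3 + r^2), sq_nonneg (r^2 + r), sq_nonneg (r^2 - 1), sq_nonneg (r + 1),
    sq_nonneg (r^3 + r^2 - 2*r), sq_nonneg (2*r^2 + 3*r), sq_nonneg (r^2 + 2*r), sq_nonneg r]

end Sextics

theorem Rat.sq_ne_two (q : ℚ) : q ^ 2 ≠ 2 := fun h =>
  (by norm_num : ¬IsSquare (2 : ℚ)) ⟨q, by rw [← h, sq]⟩

theorem Rat.sq_add_two_mul_sub_one_ne_zero (r : ℚ) : r ^ 2 + 2 * r - 1 ≠ 0 := fun h =>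
  Rat.sq_ne_two (r + 1) (by linear_combination h)

theorem Rat.sq_sub_two_mul_sub_one_ne_zero (r : ℚ) : r ^ 2 - 2 * r - 1 ≠ 0 := fun h =>
  Rat.sq_add_two_mul_sub_one_ne_zero (-r) (by linear_combination h)

theorem sq_sub_one_ne_zero {R : Type*} [Ring R] [NoZeroDivisors R] {r : R} (h₁ : r ≠ 1)
    (h₂ : r ≠ -1) : r ^ 2 - 1 ≠ 0 := by
  rw [sub_ne_zero, Ne, sq_eq_one_iff]
  tauto

theorem stmt_15 (b r : ℚ) :
    let a₄ : ℚ := r^8 - 4*r^6 + 22*r^4 - 4*r^2 + 1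
    let a₃ : ℚ := -2*b*(r^2 - 2*r - 1)*(r - 1)^3*(r + 1)^3
    let a₂ : ℚ := b^2*(r^4 - 8*r^3 - 6*r^2 + 8*r + 1)*(r - 1)^2*(r + 1)^2
    let a₁ : ℚ := 4*b^3*r*(r^2 - 2*r - 1)*(r - 1)^2*(r + 1)^2
    let a₀ : ℚ := b^4*(r - 1)^2*(r + 1)^2*(r^2 + 1)^2
    quarticDisc a₄ a₃ a₂ a₁ a₀
      = 16*(17*r^6 - 26*r^5 + 27*r^4 + 4*r^3 - 5*r^2 - 2*r + 1)
        * (r^6 + 2*r^5 - 5*r^4 - 4*r^3 + 27*r^2 + 26*r + 17)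
        * (r^2 + 1)^4 * (r^2 + 2*r - 1)^4 * (r^2 - 2*r - 1)^4 * (r^2 - 1)^6 * b^12
    ∧ (b ≠ 0 → r ≠ 0 → r ≠ 1 → r ≠ -1 → quarticDisc a₄ a₃ a₂ a₁ a₀ ≠ 0) := by
  refine ⟨quarticDisc_eq b r, fun hb _ h₁ h₂ => ?_⟩
  rw [quarticDisc_eq b r]
  have := sextic_pos r
  have := sextic_reflected_pos r
  have := Rat.sq_add_two_mul_sub_one_ne_zero r
  have := Rat.sq_sub_two_mul_sub_one_ne_zero r
  have := sq_sub_one_ne_zero h₁ h₂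
  positivity
end
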